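/- Let A₁B₃A₂B₁A₃B₂ be a hexagon inscribed in a conic in the real projective plane. For each permutation (i,j,k) of (1,2,3) let Q_{ij} be the intersection point of lines A_iB_k and B_jA_k. Then the three lines Q₁₂Q₂₁, Q₁₃Q₃₁, and Q₂₃Q₃₂ are concurrent. -/

import Mathlib

/-- Collinearity of three points of the real projective plane,
given by homogeneous coordinate vectors in `ℝ³`. -/
def collin (u v w : Fin 3 → ℝ) : Prop :=
  Matrix.det (Matrix.of ![u, v, w]) = 0

/-- `X` is the (well-defined) intersection point of the line through `u, v`
and the line through `w, z`. -/
def IsInter (u v w z X : Fin 3 → ℝ) : Prop :=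
  X ≠ 0 ∧ LinearIndependent ℝ ![u, v] ∧ LinearIndependent ℝ ![w, z] ∧
    collin u v X ∧ collin w z X ∧ ¬ (collin u v w ∧ collin u v z)

/-- A point with homogeneous coordinates `v` lies on the conic determined by
the symmetric matrix `M`. -/
def OnConic (M : Matrix (Fin 3) (Fin 3) ℝ) (v : Fin 3 → ℝ) : Prop :=
  dotProduct v (M.mulVec v) = 0

/-!
A nondegenerate conic contains no three collinear points, so a projective change of coordinates
`T` sends `A₁, A₂, A₃` to the coordinate points. Joins and meets are cross products, which are
equivariant, so the determinant of the three lines only changes by the factor `det T ^ 8`.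
In the new frame the conic reads `a yz + b xz + c xy = 0` with `(a, b, c) ≠ 0`, so the vectors
`(yz, xz, xy)` of `B₁, B₂, B₃` are linearly dependent, and the determinant of the three lines is
an explicit polynomial multiple of their determinant.
-/

open Matrix

section CommRing

variable {R : Type*} [CommRing R]

theorem cross_mulVec (T : Matrix (Fin 3) (Fin 3) R) (u v : Fin 3 → R) :
    (T *ᵥ u) ⨯₃ (T *ᵥ v) = (adjugate T)ᵀ *ᵥ (u ⨯₃ v) := by
  ext i
  fin_cases i <;>
  · simp [cross_apply, adjugate_fin_three, mulVec, vec3_dotProduct]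
    ring

theorem triple_product_mulVec (T : Matrix (Fin 3) (Fin 3) R) (u v w : Fin 3 → R) :
    (T *ᵥ u) ⬝ᵥ (T *ᵥ v) ⨯₃ (T *ᵥ w) = T.det * u ⬝ᵥ v ⨯₃ w := by
  rw [cross_mulVec, dotProduct_mulVec, vecMul_transpose, mulVec_mulVec, adjugate_mul,
    smul_mulVec, one_mulVec, smul_dotProduct, smul_eq_mul]

theorem dotProduct_mulVec_comm_of_isSymm {M : Matrix (Fin 3) (Fin 3) R} (hM : M.IsSymm)
    (u v : Fin 3 → R) :
    u ⬝ᵥ M *ᵥ v = v ⬝ᵥ M *ᵥ u := by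
  rw [dotProduct_mulVec, ← mulVec_transpose, hM.eq, dotProduct_comm]

-- In homogeneous coordinates the join of two points and the meet of two lines are both
-- cross products.
def meetOfJoins (a b c d : Fin 3 → R) : Fin 3 → R := (a ⨯₃ b) ⨯₃ (c ⨯₃ d)

theorem meetOfJoins_mulVec (T : Matrix (Fin 3) (Fin 3) R) (a b c d : Fin 3 → R) :
    meetOfJoins (T *ᵥ a) (T *ᵥ b) (T *ᵥ c) (T *ᵥ d) = T.det • (T *ᵥ meetOfJoins a b c d) := by
  rw [meetOfJoins, cross_mulVec, cross_mulVec, cross_mulVec, adjugate_transpose,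
    transpose_transpose, adjugate_adjugate _ (by simp), smul_mulVec, meetOfJoins]
  simp

def pascalLinesDet (A1 A2 A3 B1 B2 B3 : Fin 3 → R) : R :=
  (meetOfJoins A1 B3 B2 A3 ⨯₃ meetOfJoins A2 B3 B1 A3) ⬝ᵥ
    (meetOfJoins A1 B2 B3 A2 ⨯₃ meetOfJoins A3 B2 B1 A2) ⨯₃
    (meetOfJoins A2 B1 B3 A1 ⨯₃ meetOfJoins A3 B1 B2 A1)

theorem pascalLinesDet_mulVec (T : Matrix (Fin 3) (Fin 3) R) (A1 A2 A3 B1 B2 B3 : Fin 3 → R) :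
    pascalLinesDet (T *ᵥ A1) (T *ᵥ A2) (T *ᵥ A3) (T *ᵥ B1) (T *ᵥ B2) (T *ᵥ B3) =
      T.det ^ 8 * pascalLinesDet A1 A2 A3 B1 B2 B3 := by
  simp only [pascalLinesDet, meetOfJoins_mulVec, map_smul, LinearMap.smul_apply, cross_mulVec T,
    smul_dotProduct, dotProduct_smul, triple_product_mulVec, det_transpose, det_adjugate,
    Fintype.card_fin, smul_eq_mul]
  ring

def offDiagMonomials (b : Fin 3 → R) : Fin 3 → R := ![b 1 * b 2, b 0 * b 2, b 0 * b 1]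

theorem pascalLinesDet_basis (b1 b2 b3 : Fin 3 → R) :
    pascalLinesDet ![1, 0, 0] ![0, 1, 0] ![0, 0, 1] b1 b2 b3 =
      (b1 0 * b1 1 * b2 1 * b2 2 * b3 0 * b3 2 + b1 0 * b1 2 * b2 0 * b2 1 * b3 1 * b3 2
        - b1 1 * b1 2 * b2 0 * b2 2 * b3 0 * b3 1 - b1 0 ^ 2 * b2 1 ^ 2 * b3 2 ^ 2) *
      offDiagMonomials b1 ⬝ᵥ offDiagMonomials b2 ⨯₃ offDiagMonomials b3 := by
  simp only [pascalLinesDet, meetOfJoins, offDiagMonomials, cross_apply, vec3_dotProduct,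
    cons_val_zero, cons_val_one, cons_val]
  ring

end CommRing

section Field

variable {F : Type*} [Field F]

theorem exists_eq_smul_cross_of_dotProduct_eq_zero {a b x : Fin 3 → F} (hab : a ⨯₃ b ≠ 0)
    (ha : a ⬝ᵥ x = 0) (hb : b ⬝ᵥ x = 0) : ∃ c : F, x = c • a ⨯₃ b := by
  have h : a ⨯₃ b ⨯₃ x = 0 := by
    rw [cross_cross_eq_smul_sub_smul, ha, hb, zero_smul, zero_smul, sub_zero]
  by_contra! hx
  exact crossProduct_ne_zero_iff_linearIndependent.mpr
    ((LinearIndependent.pair_iff' hab).mpr fun c => (hx c).symm) h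

theorem meetOfJoins_ne_zero {u v w z : Fin 3 → F} (hwz : LinearIndependent F ![w, z])
    (h : ¬ ((u ⨯₃ v) ⬝ᵥ w = 0 ∧ (u ⨯₃ v) ⬝ᵥ z = 0)) : meetOfJoins u v w z ≠ 0 := by
  rw [meetOfJoins, cross_cross_eq_smul_sub_smul', dotProduct_comm w]
  intro h0
  apply h
  have := LinearIndependent.pair_iff.mp hwz ((u ⨯₃ v) ⬝ᵥ z) (-((u ⨯₃ v) ⬝ᵥ w))
    (by rwa [neg_smul, ← sub_eq_add_neg])
  exact ⟨neg_eq_zero.mp this.2, this.1⟩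

end Field

theorem collin_iff_cross_dotProduct (u v w : Fin 3 → ℝ) : collin u v w ↔ (u ⨯₃ v) ⬝ᵥ w = 0 := by
  rw [collin, dotProduct_comm, triple_product_permutation, triple_product_eq_det]
  rfl

theorem IsInter.exists_eq_smul_meetOfJoins {u v w z X : Fin 3 → ℝ} (h : IsInter u v w z X) :
    ∃ c : ℝ, X = c • meetOfJoins u v w z := by
  obtain ⟨-, -, hwz, huvX, hwzX, hnot⟩ := h
  simp only [collin_iff_cross_dotProduct] at huvX hwzX hnot
  exact exists_eq_smul_cross_of_dotProduct_eq_zero (meetOfJoins_ne_zero hwz hnot) huvX hwzX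

theorem exists_ne_zero_collin_of_triple_product_eq_zero {p1 q1 p2 q2 p3 q3 : Fin 3 → ℝ}
    (h : (p1 ⨯₃ q1) ⬝ᵥ (p2 ⨯₃ q2) ⨯₃ (p3 ⨯₃ q3) = 0) :
    ∃ X ≠ 0, collin p1 q1 X ∧ collin p2 q2 X ∧ collin p3 q3 X := by
  rw [triple_product_eq_det] at h
  obtain ⟨X, hX, hNX⟩ := exists_mulVec_eq_zero_iff.mpr h
  simp only [collin_iff_cross_dotProduct]
  exact ⟨X, hX, by simpa [mulVec] using congrFun hNX 0, by simpa [mulVec] using congrFun hNX 1,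
    by simpa [mulVec] using congrFun hNX 2⟩

section Conic

variable {M : Matrix (Fin 3) (Fin 3) ℝ}

theorem onConic_mulVec_iff (T : Matrix (Fin 3) (Fin 3) ℝ) (v : Fin 3 → ℝ) :
    OnConic M (T *ᵥ v) ↔ OnConic (Tᵀ * M * T) v := by
  rw [OnConic, OnConic, ← mulVec_mulVec, ← mulVec_mulVec, dotProduct_mulVec v Tᵀ, vecMul_transpose]

theorem det_ne_zero_of_onConic (hM : M.IsSymm) (hMdet : M.det ≠ 0) {u v w : Fin 3 → ℝ}
    (hu : OnConic M u) (hv : OnConic M v) (hw : OnConic M w)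
    (huv : LinearIndependent ℝ ![u, v]) (huw : LinearIndependent ℝ ![u, w])
    (hvw : LinearIndependent ℝ ![v, w]) : (of ![u, v, w]).det ≠ 0 := by
  intro hdet
  obtain ⟨t, s, rfl⟩ : ∃ t s : ℝ, t • v + s • u = w := by
    have : ¬ LinearIndependent ℝ ![w, u, v] := by
      refine (linearIndependent_rows_iff_isUnit (A := of ![w, u, v])).not.mpr ?_
      rw [isUnit_iff_isUnit_det, isUnit_iff_ne_zero, not_not]
      change det ![w, u, v] = 0
      rw [← triple_product_eq_det, triple_product_permutation, triple_product_eq_det]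
      exact hdet
    replace := linearIndependent_finCons.not.mp this
    simpa [huv, range_cons_cons_empty, Submodule.mem_span_pair] using this
  have hs : s ≠ 0 := by
    rintro rfl
    simpa using LinearIndependent.pair_iff.mp hvw t (-1) (by simp)
  have ht : t ≠ 0 := by
    rintro rfl
    simpa using LinearIndependent.pair_iff.mp huw s (-1) (by simp)
  -- so the line `uv` lies on the conic, and `M` maps both `u` and `v` into `ℝ ∙ u ⨯₃ v`
  have huv_polar : v ⬝ᵥ M *ᵥ u = 0 := by
    have h2 : 2 * s * t * (v ⬝ᵥ M *ᵥ u) = 0 := by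
      simp only [OnConic, mulVec_add, mulVec_smul, dotProduct_add, add_dotProduct, dotProduct_smul,
        smul_dotProduct, smul_eq_mul] at hu hv hw
      linear_combination
        hw - s ^ 2 * hu - t ^ 2 * hv - s * t * dotProduct_mulVec_comm_of_isSymm hM u v
    simpa [hs, ht] using h2
  have hcross : u ⨯₃ v ≠ 0 := crossProduct_ne_zero_iff_linearIndependent.mpr huv
  obtain ⟨c, hc⟩ := exists_eq_smul_cross_of_dotProduct_eq_zero hcross hu huv_polar
  obtain ⟨d, hd⟩ := exists_eq_smul_cross_of_dotProduct_eq_zero hcross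
    (by rwa [dotProduct_mulVec_comm_of_isSymm hM]) hv
  have hker : d • u + (-c) • v = 0 := eq_zero_of_mulVec_eq_zero hMdet (by
    rw [mulVec_add, mulVec_smul, mulVec_smul, hc, hd]; module)
  obtain ⟨rfl, hc0⟩ := LinearIndependent.pair_iff.mp huv d (-c) hker
  rw [neg_eq_zero.mp hc0, zero_smul] at hc
  exact huv.ne_zero 0 (eq_zero_of_mulVec_eq_zero hMdet hc)

theorem offDiagMonomials_triple_product_eq_zero (hM : M.IsSymm) (hMdet : M.det ≠ 0)
    (he0 : OnConic M ![1, 0, 0]) (he1 : OnConic M ![0, 1, 0]) (he2 : OnConic M ![0, 0, 1])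
    {b1 b2 b3 : Fin 3 → ℝ} (hb1 : OnConic M b1) (hb2 : OnConic M b2) (hb3 : OnConic M b3) :
    offDiagMonomials b1 ⬝ᵥ offDiagMonomials b2 ⨯₃ offDiagMonomials b3 = 0 := by
  have h00 : M 0 0 = 0 := by simpa [OnConic, mulVec, dotProduct, Fin.sum_univ_three] using he0
  have h11 : M 1 1 = 0 := by simpa [OnConic, mulVec, dotProduct, Fin.sum_univ_three] using he1
  have h22 : M 2 2 = 0 := by simpa [OnConic, mulVec, dotProduct, Fin.sum_univ_three] using he2
  have h10 := hM.apply 0 1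
  have h20 := hM.apply 0 2
  have h21 := hM.apply 1 2
  -- through the three vertices of the frame, the conic is `M 1 2 yz + M 0 2 xz + M 0 1 xy = 0`
  set m : Fin 3 → ℝ := ![M 1 2, M 0 2, M 0 1] with hm_def
  have hm : m ≠ 0 := by
    intro h
    have h12 : M 1 2 = 0 := congrFun h 0
    have h02 : M 0 2 = 0 := congrFun h 1
    have h01 : M 0 1 = 0 := congrFun h 2
    apply hMdet
    rw [det_fin_three]
    simp [h00, h11, h22, h12, h02, h01, h10, h20, h21]
  have hrow : ∀ b, OnConic M b → offDiagMonomials b ⬝ᵥ m = 0 := by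
    intro b hb
    simp only [OnConic, mulVec, vec3_dotProduct, offDiagMonomials, hm_def, cons_val_zero,
      cons_val_one, cons_val, h00, h11, h22, h10, h20, h21] at hb ⊢
    linear_combination hb / 2
  rw [triple_product_eq_det]
  refine exists_mulVec_eq_zero_iff.mp ⟨m, hm, ?_⟩
  ext i
  fin_cases i
  · simpa [mulVec] using hrow b1 hb1
  · simpa [mulVec] using hrow b2 hb2
  · simpa [mulVec] using hrow b3 hb3

theorem pascalLinesDet_eq_zero_of_onConic (hM : M.IsSymm) (hMdet : M.det ≠ 0)
    {A1 A2 A3 B1 B2 B3 : Fin 3 → ℝ} (hA : (of ![A1, A2, A3]).det ≠ 0)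
    (hA1 : OnConic M A1) (hA2 : OnConic M A2) (hA3 : OnConic M A3)
    (hB1 : OnConic M B1) (hB2 : OnConic M B2) (hB3 : OnConic M B3) :
    pascalLinesDet A1 A2 A3 B1 B2 B3 = 0 := by
  set T : Matrix (Fin 3) (Fin 3) ℝ := (of ![A1, A2, A3])ᵀ
  have hT : IsUnit T.det := by rwa [det_transpose, isUnit_iff_ne_zero]
  have hTe0 : T *ᵥ ![1, 0, 0] = A1 := by ext j; simp [T, mulVec]
  have hTe1 : T *ᵥ ![0, 1, 0] = A2 := by ext j; simp [T, mulVec]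
  have hTe2 : T *ᵥ ![0, 0, 1] = A3 := by ext j; simp [T, mulVec]
  have hTb : ∀ B, T *ᵥ (T⁻¹ *ᵥ B) = B := fun B => by
    rw [mulVec_mulVec, mul_nonsing_inv T hT, one_mulVec]
  have hM' : (Tᵀ * M * T).IsSymm := by
    simp [IsSymm, transpose_mul, hM.eq, Matrix.mul_assoc]
  have hM'det : (Tᵀ * M * T).det ≠ 0 := by
    simpa [det_mul, hMdet] using hT.ne_zero
  have hon {v P : Fin 3 → ℝ} (hvP : T *ᵥ v = P) (hP : OnConic M P) : OnConic (Tᵀ * M * T) v :=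
    (onConic_mulVec_iff T v).mp (hvP ▸ hP)
  rw [← hTe0, ← hTe1, ← hTe2, ← hTb B1, ← hTb B2, ← hTb B3, pascalLinesDet_mulVec,
    pascalLinesDet_basis, offDiagMonomials_triple_product_eq_zero hM' hM'det (hon hTe0 hA1)
      (hon hTe1 hA2) (hon hTe2 hA3) (hon (hTb B1) hB1) (hon (hTb B2) hB2) (hon (hTb B3) hB3),
    mul_zero, mul_zero]

end Conic

theorem generalized_pascal
    (M : Matrix (Fin 3) (Fin 3) ℝ) (hMsymm : M.IsSymm) (hMdet : M.det ≠ 0)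
    (A1 A2 A3 B1 B2 B3 Q12 Q21 Q13 Q31 Q23 Q32 : Fin 3 → ℝ)
    (honA1 : OnConic M A1) (honA2 : OnConic M A2) (honA3 : OnConic M A3)
    (honB1 : OnConic M B1) (honB2 : OnConic M B2) (honB3 : OnConic M B3)
    (hdistinct : List.Pairwise (fun u v => LinearIndependent ℝ ![u, v])
      [A1, A2, A3, B1, B2, B3])
    (hQ12 : IsInter A1 B3 B2 A3 Q12)
    (hQ21 : IsInter A2 B3 B1 A3 Q21)
    (hQ13 : IsInter A1 B2 B3 A2 Q13)
    (hQ31 : IsInter A3 B2 B1 A2 Q31)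
    (hQ23 : IsInter A2 B1 B3 A1 Q23)
    (hQ32 : IsInter A3 B1 B2 A1 Q32) :
    ∃ X : Fin 3 → ℝ, X ≠ 0 ∧
      collin Q12 Q21 X ∧ collin Q13 Q31 X ∧ collin Q23 Q32 X := by
  simp only [List.pairwise_cons, List.mem_cons, List.not_mem_nil, forall_eq_or_imp]
    at hdistinct
  obtain ⟨⟨h12, h13, -⟩, ⟨h23, -⟩, -⟩ := hdistinct
  have hA := det_ne_zero_of_onConic hMsymm hMdet honA1 honA2 honA3 h12 h13 h23
  have hP := pascalLinesDet_eq_zero_of_onConic hMsymm hMdet hA honA1 honA2 honA3 honB1 honB2 honB3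
  obtain ⟨c12, rfl⟩ := hQ12.exists_eq_smul_meetOfJoins
  obtain ⟨c21, rfl⟩ := hQ21.exists_eq_smul_meetOfJoins
  obtain ⟨c13, rfl⟩ := hQ13.exists_eq_smul_meetOfJoins
  obtain ⟨c31, rfl⟩ := hQ31.exists_eq_smul_meetOfJoins
  obtain ⟨c23, rfl⟩ := hQ23.exists_eq_smul_meetOfJoins
  obtain ⟨c32, rfl⟩ := hQ32.exists_eq_smul_meetOfJoins
  apply exists_ne_zero_collin_of_triple_product_eq_zero
  rw [pascalLinesDet] at hP
  simp [hP]
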